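/- Any finite connected contractible configuration in Z^2 can be reduced to a single cell by a finite sequence of steps, each step removing either a leaf or a NE-corner or NW-corner that belongs to a 4-cycle, such that every intermediate configuration is connected and contractible. -/

import Mathlib

/-- Two grid cells are adjacent if their L1 (Manhattan) distance is 1. -/
def gridAdj (p q : ℤ × ℤ) : Prop :=
  |p.1 - q.1| + |p.2 - q.2| = 1

/-- Reachability within a set `S` of cells, along grid adjacency. -/
inductive ReachIn (S : Set (ℤ × ℤ)) : ℤ × ℤ → ℤ × ℤ → Prop
  | refl {p : ℤ × ℤ} (hp : p ∈ S) : ReachIn S p p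
  | tail {p q r : ℤ × ℤ} (h : ReachIn S p q) (hadj : gridAdj q r) (hr : r ∈ S) :
      ReachIn S p r

/-- A set of cells is connected (as induced subgraph of the grid). -/
def ConnectedConf (C : Set (ℤ × ℤ)) : Prop :=
  C.Nonempty ∧ ∀ p ∈ C, ∀ q ∈ C, ReachIn C p q

/-- A configuration is contractible if the subgraph of the grid induced by its
complement is connected. -/
def Contractible (C : Set (ℤ × ℤ)) : Prop :=
  ∀ p ∈ Cᶜ, ∀ q ∈ Cᶜ, ReachIn Cᶜ p q

/-- A leaf: a cell of `C` with exactly one neighbor in `C`. -/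
def IsLeaf (C : Set (ℤ × ℤ)) (v : ℤ × ℤ) : Prop :=
  v ∈ C ∧ ∃! w, w ∈ C ∧ gridAdj v w

/-- A NE-corner: a cell of `C` whose neighbors in `C` are exactly the cells
South and West of it. -/
def IsNECorner (C : Set (ℤ × ℤ)) (v : ℤ × ℤ) : Prop :=
  v ∈ C ∧ (v.1 - 1, v.2) ∈ C ∧ (v.1, v.2 - 1) ∈ C ∧
    (v.1 + 1, v.2) ∉ C ∧ (v.1, v.2 + 1) ∉ C

/-- A NW-corner: a cell of `C` whose neighbors in `C` are exactly the cells
South and East of it. -/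
def IsNWCorner (C : Set (ℤ × ℤ)) (v : ℤ × ℤ) : Prop :=
  v ∈ C ∧ (v.1 + 1, v.2) ∈ C ∧ (v.1, v.2 - 1) ∈ C ∧
    (v.1 - 1, v.2) ∉ C ∧ (v.1, v.2 + 1) ∉ C

/-- A hole of `C`: a finite connected component of the complement of `C`. -/
def IsHole (C H : Set (ℤ × ℤ)) : Prop :=
  H.Finite ∧ ∃ p ∈ Cᶜ, H = {q | ReachIn Cᶜ p q}

/-- One elimination step: remove a leaf, or a NE-corner belonging to a 4-cycle,
or a NW-corner belonging to a 4-cycle. -/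
def ElimStep (C D : Set (ℤ × ℤ)) : Prop :=
  ∃ v, D = C \ {v} ∧
    (IsLeaf C v ∨ (IsNECorner C v ∧ (v.1 - 1, v.2 - 1) ∈ C) ∨
      (IsNWCorner C v ∧ (v.1 + 1, v.2 - 1) ∈ C))

/-!
By induction on the number of cells, every finite connected contractible configuration `C` with at
least two cells has two removable cells. Let `t` be the rightmost cell of the top row of `C`. If `t`
is neither a leaf nor a NE-corner of a 4-cycle, its South and West neighbours lie in `C` and the
diagonal cell between them does not. These two neighbours cannot be joined inside `C \ {t}`: closed
up through `t`, such a path would wind once around the corner that `t` shares with the diagonal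
cell, whereas contractibility joins the diagonal cell to the region above `C` by a path in the
complement, along which the winding number is constant. So `t` is a cut cell, and the induction
hypothesis, applied to `t` together with either side, produces a removable cell on each side. The
leftmost cell of the top row is treated in the same way with NW-corners; when the two coincide it
is a leaf, and the induction hypothesis is applied to `C` without it. Removing a removable cell
preserves connectedness and contractibility, which gives the reduction.
-/

lemma gridAdj_iff_eq {p q : ℤ × ℤ} : gridAdj p q ↔
    q = (p.1 + 1, p.2) ∨ q = (p.1 - 1, p.2) ∨ q = (p.1, p.2 + 1) ∨ q = (p.1, p.2 - 1) := by
  obtain ⟨a, b⟩ := p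
  obtain ⟨c, d⟩ := q
  simp only [gridAdj, Prod.mk.injEq]
  constructor
  · intro h
    rcases abs_cases (a - c) with h₁ | h₁ <;> rcases abs_cases (b - d) with h₂ | h₂ <;> omega
  · rintro (⟨rfl, rfl⟩ | ⟨rfl, rfl⟩ | ⟨rfl, rfl⟩ | ⟨rfl, rfl⟩) <;> norm_num

lemma gridAdj.symm {p q : ℤ × ℤ} (h : gridAdj p q) : gridAdj q p := by
  simpa only [gridAdj, abs_sub_comm] using h

lemma gridAdj.ne {p q : ℤ × ℤ} (h : gridAdj p q) : p ≠ q := by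
  rintro rfl
  simp [gridAdj] at h

lemma gridAdj_east (p : ℤ × ℤ) : gridAdj p (p.1 + 1, p.2) := gridAdj_iff_eq.2 (by simp)
lemma gridAdj_west (p : ℤ × ℤ) : gridAdj p (p.1 - 1, p.2) := gridAdj_iff_eq.2 (by simp)
lemma gridAdj_north (p : ℤ × ℤ) : gridAdj p (p.1, p.2 + 1) := gridAdj_iff_eq.2 (by simp)
lemma gridAdj_south (p : ℤ × ℤ) : gridAdj p (p.1, p.2 - 1) := gridAdj_iff_eq.2 (by simp)

namespace ReachIn

variable {S T : Set (ℤ × ℤ)} {p q r : ℤ × ℤ}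

lemma mem_left (h : ReachIn S p q) : p ∈ S := by
  induction h with
  | refl hp => exact hp
  | tail _ _ _ ih => exact ih

lemma mem_right (h : ReachIn S p q) : q ∈ S := by
  cases h with
  | refl hp => exact hp
  | tail _ _ hr => exact hr

lemma mono (hST : S ⊆ T) (h : ReachIn S p q) : ReachIn T p q := by
  induction h with
  | refl hp => exact refl (hST hp)
  | tail _ hadj hr ih => exact ih.tail hadj (hST hr)

lemma trans (h₁ : ReachIn S p q) (h₂ : ReachIn S q r) : ReachIn S p r := by
  induction h₂ with
  | refl _ => exact h₁
  | tail _ hadj hr ih => exact ih.tail hadj hr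

lemma head (hp : p ∈ S) (hadj : gridAdj p q) (h : ReachIn S q r) : ReachIn S p r :=
  ((refl hp).tail hadj h.mem_left).trans h

lemma symm (h : ReachIn S p q) : ReachIn S q p := by
  induction h with
  | refl hp => exact refl hp
  | tail _ hadj hr ih => exact head hr hadj.symm ih

lemma to_component (h : ReachIn S p q) : ReachIn {x | ReachIn S p x} p q := by
  induction h with
  | refl hp => exact refl (refl hp)
  | tail h hadj hr ih => exact ih.tail hadj (h.tail hadj hr)

end ReachIn

abbrev gridGraph : SimpleGraph (ℤ × ℤ) where
  Adj := gridAdj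
  symm := ⟨fun _ _ h => h.symm⟩
  loopless := ⟨fun _ h => h.ne rfl⟩

open SimpleGraph

lemma ReachIn.exists_walk {S : Set (ℤ × ℤ)} {p q : ℤ × ℤ} (h : ReachIn S p q) :
    ∃ w : gridGraph.Walk p q, ∀ c ∈ w.support, c ∈ S := by
  induction h with
  | refl hp => exact ⟨.nil, by simpa using hp⟩
  | tail _ hadj hr ih =>
    obtain ⟨w, hw⟩ := ih
    refine ⟨w.concat hadj, fun c hc => ?_⟩
    rw [Walk.support_concat w hadj, List.mem_append, List.mem_singleton] at hc
    rcases hc with hc | rfl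
    exacts [hw c hc, hr]

/-- The signed crossing (`1` eastwards, `-1` westwards) of the step `c → c'` with the vertical
half-line going up from the north-east corner of the cell `p`. -/
def crossing (p c c' : ℤ × ℤ) : ℤ :=
  if c.2 = c'.2 ∧ p.2 < c.2 then (if p.1 < c'.1 then 1 else 0) - (if p.1 < c.1 then 1 else 0)
  else 0

def windingNumber {u v : ℤ × ℤ} (w : gridGraph.Walk u v) (p : ℤ × ℤ) : ℤ :=
  (w.darts.map fun d => crossing p d.fst d.snd).sum

lemma crossing_sub_crossing_east {p c c' : ℤ × ℤ} (h : gridAdj c c')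
    (hc : c ≠ (p.1 + 1, p.2)) (hc' : c' ≠ (p.1 + 1, p.2)) :
    crossing p c c' - crossing (p.1 + 1, p.2) c c' =
      (if c'.1 = p.1 + 1 ∧ p.2 < c'.2 then 1 else 0) -
        (if c.1 = p.1 + 1 ∧ p.2 < c.2 then 1 else 0) := by
  obtain ⟨a, b⟩ := c
  obtain ⟨x, y⟩ := p
  rcases gridAdj_iff_eq.1 h with rfl | rfl | rfl | rfl <;>
    · simp only [crossing, ne_eq, Prod.mk.injEq, true_and] at hc hc' ⊢
      split_ifs <;> omega

lemma crossing_north {p c c' : ℤ × ℤ} (h : gridAdj c c')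
    (hc : c ≠ (p.1, p.2 + 1)) (hc' : c' ≠ (p.1, p.2 + 1)) :
    crossing (p.1, p.2 + 1) c c' = crossing p c c' := by
  obtain ⟨a, b⟩ := c
  obtain ⟨x, y⟩ := p
  rcases gridAdj_iff_eq.1 h with rfl | rfl | rfl | rfl <;>
    · simp only [crossing, ne_eq, Prod.mk.injEq, true_and] at hc hc' ⊢
      split_ifs <;> omega

lemma windingNumber_cons {u v w : ℤ × ℤ} (h : gridGraph.Adj u v) (γ : gridGraph.Walk v w)
    (p : ℤ × ℤ) : windingNumber (.cons h γ) p = crossing p u v + windingNumber γ p := by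
  simp [windingNumber]

lemma windingNumber_concat {u v w : ℤ × ℤ} (γ : gridGraph.Walk u v) (h : gridGraph.Adj v w)
    (p : ℤ × ℤ) : windingNumber (γ.concat h) p = windingNumber γ p + crossing p v w := by
  simp [windingNumber]

lemma windingNumber_sub_windingNumber {u v p q : ℤ × ℤ} (γ : gridGraph.Walk u v) (f : ℤ × ℤ → ℤ)
    (h : ∀ d ∈ γ.darts, crossing p d.fst d.snd - crossing q d.fst d.snd = f d.snd - f d.fst) :
    windingNumber γ p - windingNumber γ q = f v - f u := by
  induction γ with
  | nil => simp [windingNumber]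
  | cons hadj γ ih =>
    rw [windingNumber_cons, windingNumber_cons]
    have hd := h _ List.mem_cons_self
    have := ih fun d hd => h d (List.mem_cons_of_mem _ hd)
    simp only at hd
    linarith

lemma windingNumber_east {u p : ℤ × ℤ} (γ : gridGraph.Walk u u)
    (hγ : (p.1 + 1, p.2) ∉ γ.support) : windingNumber γ (p.1 + 1, p.2) = windingNumber γ p := by
  have := windingNumber_sub_windingNumber γ (fun c => if c.1 = p.1 + 1 ∧ p.2 < c.2 then 1 else 0)
    fun d hd => crossing_sub_crossing_east d.adj
      (ne_of_mem_of_not_mem (γ.dart_fst_mem_support_of_mem_darts hd) hγ)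
      (ne_of_mem_of_not_mem (γ.dart_snd_mem_support_of_mem_darts hd) hγ)
  linarith

lemma windingNumber_north {u p : ℤ × ℤ} (γ : gridGraph.Walk u u)
    (hγ : (p.1, p.2 + 1) ∉ γ.support) : windingNumber γ (p.1, p.2 + 1) = windingNumber γ p := by
  have := windingNumber_sub_windingNumber (p := (p.1, p.2 + 1)) (q := p) γ 0
    fun d hd => by
      rw [crossing_north d.adj (ne_of_mem_of_not_mem (γ.dart_fst_mem_support_of_mem_darts hd) hγ)
        (ne_of_mem_of_not_mem (γ.dart_snd_mem_support_of_mem_darts hd) hγ)]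
      simp
  linarith

lemma windingNumber_eq_of_gridAdj {u p q : ℤ × ℤ} (γ : gridGraph.Walk u u) (hpq : gridAdj p q)
    (hp : p ∉ γ.support) (hq : q ∉ γ.support) : windingNumber γ p = windingNumber γ q := by
  rcases gridAdj_iff_eq.1 hpq with rfl | rfl | rfl | rfl
  · exact (windingNumber_east γ hq).symm
  · simpa using windingNumber_east γ (p := (p.1 - 1, p.2)) (by simpa using hp)
  · exact (windingNumber_north γ hq).symm
  · simpa using windingNumber_north γ (p := (p.1, p.2 - 1)) (by simpa using hp)

lemma windingNumber_eq_of_reachIn {u p q : ℤ × ℤ} {T : Set (ℤ × ℤ)} (γ : gridGraph.Walk u u)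
    (hγ : ∀ c ∈ γ.support, c ∉ T) (h : ReachIn T p q) :
    windingNumber γ p = windingNumber γ q := by
  induction h with
  | refl _ => rfl
  | tail h hadj hr ih =>
    exact ih.trans (windingNumber_eq_of_gridAdj γ hadj
      (fun hc => hγ _ hc h.mem_right) (fun hc => hγ _ hc hr))

lemma windingNumber_eq_zero {u v p : ℤ × ℤ} (γ : gridGraph.Walk u v)
    (h : ∀ d ∈ γ.darts, crossing p d.fst d.snd = 0) : windingNumber γ p = 0 :=
  List.sum_eq_zero fun x hx => by
    obtain ⟨d, hd, rfl⟩ := List.mem_map.1 hx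
    exact h d hd

/-- A step crossing the half-line above `p` within row `p.2 + 1` joins the two cells of that row
next to the half-line. -/
lemma crossing_eq_zero_of_ne {p c c' x : ℤ × ℤ} (h : gridAdj c c') (hc : c.2 ≤ p.2 + 1)
    (hx : x = (p.1, p.2 + 1) ∨ x = (p.1 + 1, p.2 + 1)) (hcx : c ≠ x) (hc'x : c' ≠ x) :
    crossing p c c' = 0 := by
  obtain ⟨a, b⟩ := c
  obtain ⟨x₁, x₂⟩ := p
  rcases hx with rfl | rfl <;> rcases gridAdj_iff_eq.1 h with rfl | rfl | rfl | rfl <;>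
    · simp only [crossing, ne_eq, Prod.mk.injEq] at hc hcx hc'x ⊢
      split_ifs <;> omega

lemma windingNumber_eq_zero_of_contractible {C : Set (ℤ × ℤ)} (hC : Contractible C) {y : ℤ}
    (htop : ∀ c ∈ C, c.2 ≤ y) {u p : ℤ × ℤ} (γ : gridGraph.Walk u u)
    (hγ : ∀ c ∈ γ.support, c ∈ C) (hp : p ∉ C) : windingNumber γ p = 0 := by
  have hq : (p.1, y + 1) ∉ C := fun h => by linarith [htop _ h]
  rw [windingNumber_eq_of_reachIn γ (fun c hc h => absurd (hγ c hc) h) (hC p hp _ hq)]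
  refine windingNumber_eq_zero γ fun d hd => if_neg fun h => ?_
  linarith [htop _ (hγ _ (γ.dart_fst_mem_support_of_mem_darts hd))]

lemma windingNumber_eq_zero_of_forall_ne {u v p x : ℤ × ℤ} (γ : gridGraph.Walk u v)
    (hx : x = (p.1, p.2 + 1) ∨ x = (p.1 + 1, p.2 + 1))
    (hγ : ∀ c ∈ γ.support, c.2 ≤ p.2 + 1 ∧ c ≠ x) : windingNumber γ p = 0 :=
  windingNumber_eq_zero γ fun d hd =>
    have h₁ := hγ _ (γ.dart_fst_mem_support_of_mem_darts hd)
    have h₂ := hγ _ (γ.dart_snd_mem_support_of_mem_darts hd)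
    crossing_eq_zero_of_ne d.adj h₁.1 hx h₁.2 h₂.2

lemma forall_mem_support_cons_concat {C : Set (ℤ × ℤ)} {u s t : ℤ × ℤ} (h₁ : gridGraph.Adj u s)
    (γ : gridGraph.Walk s t) (h₂ : gridGraph.Adj t u) (hu : u ∈ C)
    (hγ : ∀ c ∈ γ.support, c ∈ C \ {u}) : ∀ c ∈ (Walk.cons h₁ (γ.concat h₂)).support, c ∈ C := by
  intro c hc
  simp only [Walk.support_cons, Walk.support_concat, List.mem_cons, List.mem_append,
    List.not_mem_nil, or_false] at hc
  rcases hc with rfl | hc | rfl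
  exacts [hu, (hγ c hc).1, hu]

lemma diagonal_mem_of_reachIn_south_west {C : Set (ℤ × ℤ)} (hC : Contractible C) {v : ℤ × ℤ}
    (htop : ∀ c ∈ C, c.2 ≤ v.2) (hv : v ∈ C)
    (h : ReachIn (C \ {v}) (v.1, v.2 - 1) (v.1 - 1, v.2)) : (v.1 - 1, v.2 - 1) ∈ C := by
  by_contra hd
  obtain ⟨γ, hγ⟩ := h.exists_walk
  have hpath : windingNumber γ (v.1 - 1, v.2 - 1) = 0 := by
    refine windingNumber_eq_zero_of_forall_ne γ (x := v) (Or.inr (by ext <;> simp)) fun c hc => ?_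
    have := hγ c hc
    exact ⟨by simpa using htop c this.1, this.2⟩
  have hloop := windingNumber_eq_zero_of_contractible hC htop _
    (forall_mem_support_cons_concat (gridAdj_south v) γ (gridAdj_west v).symm hv hγ) hd
  rw [windingNumber_cons, windingNumber_concat, hpath] at hloop
  simp [crossing] at hloop

lemma diagonal_mem_of_reachIn_south_east {C : Set (ℤ × ℤ)} (hC : Contractible C) {v : ℤ × ℤ}
    (htop : ∀ c ∈ C, c.2 ≤ v.2) (hv : v ∈ C)
    (h : ReachIn (C \ {v}) (v.1, v.2 - 1) (v.1 + 1, v.2)) : (v.1 + 1, v.2 - 1) ∈ C := by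
  by_contra hd
  obtain ⟨γ, hγ⟩ := h.exists_walk
  have hpath : windingNumber γ (v.1, v.2 - 1) = 0 := by
    refine windingNumber_eq_zero_of_forall_ne γ (x := v) (Or.inl (by ext <;> simp)) fun c hc => ?_
    have := hγ c hc
    exact ⟨by simpa using htop c this.1, this.2⟩
  have hγ' := forall_mem_support_cons_concat (gridAdj_south v) γ (gridAdj_east v).symm hv hγ
  -- `(v.1, v.2 - 1)` lies on the loop, but shares the enclosed corner with `(v.1 + 1, v.2 - 1)`
  have hshift := windingNumber_east _ (p := (v.1, v.2 - 1)) fun h => hd (hγ' _ h)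
  have hloop := windingNumber_eq_zero_of_contractible hC htop _ hγ' hd
  rw [hshift, windingNumber_cons, windingNumber_concat, hpath] at hloop
  simp [crossing] at hloop

structure IsDisk (C : Set (ℤ × ℤ)) : Prop where
  finite : C.Finite
  connected : ConnectedConf C
  contractible : Contractible C

def Removable (C : Set (ℤ × ℤ)) (v : ℤ × ℤ) : Prop :=
  IsLeaf C v ∨ (IsNECorner C v ∧ (v.1 - 1, v.2 - 1) ∈ C) ∨
    (IsNWCorner C v ∧ (v.1 + 1, v.2 - 1) ∈ C)

namespace Removable

variable {C : Set (ℤ × ℤ)} {v : ℤ × ℤ}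

lemma mem (h : Removable C v) : v ∈ C := by
  rcases h with h | h | h
  exacts [h.1, h.1.1, h.1.1]

lemma exists_gridAdj_not_mem (h : Removable C v) : ∃ n, gridAdj v n ∧ n ∉ C := by
  rcases h with ⟨-, w, -, hw⟩ | ⟨h, -⟩ | ⟨h, -⟩
  · by_contra! hall
    have hN := hw _ ⟨hall _ (gridAdj_north v), gridAdj_north v⟩
    have hS := hw _ ⟨hall _ (gridAdj_south v), gridAdj_south v⟩
    have := congrArg Prod.snd (hN.trans hS.symm)
    simp at this
    omega
  exacts [⟨_, gridAdj_north v, h.2.2.2.2⟩, ⟨_, gridAdj_north v, h.2.2.2.2⟩]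

lemma exists_reachIn (h : Removable C v) :
    ∃ z ∈ C \ {v}, ∀ c ∈ C, gridAdj v c → ReachIn (C \ {v}) c z := by
  rcases h with ⟨-, w, ⟨hw, hvw⟩, huniq⟩ | ⟨⟨-, hW, hS, hE, hN⟩, hd⟩ | ⟨⟨-, hE, hS, hW, hN⟩, hd⟩
  · refine ⟨w, ⟨hw, hvw.ne.symm⟩, fun c hc hvc => ?_⟩
    rw [huniq c ⟨hc, hvc⟩]
    exact .refl ⟨hw, hvw.ne.symm⟩
  all_goals
    refine ⟨(v.1, v.2 - 1), ⟨hS, by simp [Prod.ext_iff]⟩, fun c hc hvc => ?_⟩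
    rcases gridAdj_iff_eq.1 hvc with rfl | rfl | rfl | rfl
  · exact absurd hc hE
  · exact ((ReachIn.refl (S := C \ {v}) ⟨hW, by simp [Prod.ext_iff]⟩).tail (gridAdj_south _)
      ⟨hd, by simp [Prod.ext_iff]⟩).tail (gridAdj_west (v.1, v.2 - 1)).symm
      ⟨hS, by simp [Prod.ext_iff]⟩
  · exact absurd hc hN
  · exact .refl ⟨hS, by simp [Prod.ext_iff]⟩
  · exact ((ReachIn.refl (S := C \ {v}) ⟨hE, by simp [Prod.ext_iff]⟩).tail (gridAdj_south _)
      ⟨hd, by simp [Prod.ext_iff]⟩).tail (gridAdj_east (v.1, v.2 - 1)).symm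
      ⟨hS, by simp [Prod.ext_iff]⟩
  · exact absurd hc hW
  · exact absurd hc hN
  · exact .refl ⟨hS, by simp [Prod.ext_iff]⟩

lemma of_subset {D : Set (ℤ × ℤ)} (hDC : D ⊆ C) (hnbr : ∀ c ∈ C, gridAdj v c → c ∈ D)
    (h : Removable D v) : Removable C v := by
  rcases h with ⟨hv, w, hw, huniq⟩ | ⟨⟨hv, hW, hS, hE, hN⟩, hd⟩ | ⟨⟨hv, hE, hS, hW, hN⟩, hd⟩
  · exact .inl ⟨hDC hv, w, ⟨hDC hw.1, hw.2⟩, fun c hc => huniq c ⟨hnbr c hc.1 hc.2, hc.2⟩⟩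
  · exact .inr <| .inl ⟨⟨hDC hv, hDC hW, hDC hS, fun h => hE (hnbr _ h (gridAdj_east v)),
      fun h => hN (hnbr _ h (gridAdj_north v))⟩, hDC hd⟩
  · exact .inr <| .inr ⟨⟨hDC hv, hDC hE, hDC hS, fun h => hW (hnbr _ h (gridAdj_west v)),
      fun h => hN (hnbr _ h (gridAdj_north v))⟩, hDC hd⟩

end Removable

lemma Contractible.of_subset {C D : Set (ℤ × ℤ)} (hC : Contractible C) (hDC : D ⊆ C)
    (h : ∀ x ∈ Dᶜ, ∃ y ∈ Cᶜ, ReachIn Dᶜ x y) : Contractible D := by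
  intro p hp q hq
  obtain ⟨p', hp', hpp'⟩ := h p hp
  obtain ⟨q', hq', hqq'⟩ := h q hq
  exact (hpp'.trans ((hC p' hp' q' hq').mono (Set.compl_subset_compl.2 hDC))).trans hqq'.symm

lemma Contractible.diff_singleton {C : Set (ℤ × ℤ)} (hC : Contractible C) {v n : ℤ × ℤ}
    (hadj : gridAdj v n) (hn : n ∉ C) : Contractible (C \ {v}) := by
  refine hC.of_subset Set.sdiff_subset fun x hx => ?_
  by_cases hxC : x ∈ C
  · obtain rfl : x = v := by simpa [hxC] using hx
    exact ⟨n, hn, (ReachIn.refl hx).tail hadj fun h => hn h.1⟩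
  · exact ⟨x, hxC, .refl hx⟩

lemma ConnectedConf.diff_singleton {C : Set (ℤ × ℤ)} (hC : ConnectedConf C) {v z : ℤ × ℤ}
    (hz : z ∈ C \ {v}) (hnbr : ∀ c ∈ C, gridAdj v c → ReachIn (C \ {v}) c z) :
    ConnectedConf (C \ {v}) := by
  have hback : ∀ q, ReachIn C z q → q = v ∨ ReachIn (C \ {v}) q z := by
    intro q h
    induction h with
    | refl _ => exact .inr (.refl hz)
    | @tail q r _ hadj hr ih =>
      by_cases hrv : r = v
      · exact .inl hrv
      rcases ih with rfl | ih
      · exact .inr (hnbr r hr hadj)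
      · exact .inr (ih.head ⟨hr, hrv⟩ hadj.symm)
  have hreach : ∀ p ∈ C \ {v}, ReachIn (C \ {v}) p z := fun p hp =>
    (hback p (hC.2 z hz.1 p hp.1)).resolve_left hp.2
  exact ⟨⟨z, hz⟩, fun p hp q hq => (hreach p hp).trans (hreach q hq).symm⟩

lemma IsDisk.diff_removable {C : Set (ℤ × ℤ)} (hC : IsDisk C) {v : ℤ × ℤ} (hv : Removable C v) :
    IsDisk (C \ {v}) := by
  obtain ⟨n, hadj, hn⟩ := hv.exists_gridAdj_not_mem
  obtain ⟨z, hz, hnbr⟩ := hv.exists_reachIn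
  exact ⟨hC.finite.sdiff, hC.connected.diff_singleton hz hnbr,
    hC.contractible.diff_singleton hadj hn⟩

lemma ConnectedConf.exists_gridAdj_mem {C : Set (ℤ × ℤ)} (hC : ConnectedConf C)
    (hnt : C.Nontrivial) {v : ℤ × ℤ} (hv : v ∈ C) : ∃ c ∈ C, gridAdj v c := by
  obtain ⟨c, hc, hcv⟩ := hnt.exists_ne v
  cases hC.2 c hc v hv with
  | refl => exact absurd rfl hcv
  | tail h hadj => exact ⟨_, h.mem_right, hadj.symm⟩

lemma ConnectedConf.isLeaf {C : Set (ℤ × ℤ)} (hC : ConnectedConf C) (hnt : C.Nontrivial)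
    {v s : ℤ × ℤ} (hv : v ∈ C) (hs : ∀ c ∈ C, gridAdj v c → c = s) : IsLeaf C v := by
  obtain ⟨c, hc, hvc⟩ := hC.exists_gridAdj_mem hnt hv
  obtain rfl := hs c hc hvc
  exact ⟨hv, c, ⟨hc, hvc⟩, fun c' h => hs c' h.1 h.2⟩

lemma ConnectedConf.isLeaf_or_mem {C : Set (ℤ × ℤ)} (hC : ConnectedConf C)
    (hnt : C.Nontrivial) {v a b : ℤ × ℤ} (hv : v ∈ C) (h : ∀ c ∈ C, gridAdj v c → c = a ∨ c = b) :
    IsLeaf C v ∨ a ∈ C ∧ b ∈ C := by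
  by_cases hb : b ∈ C
  · by_cases ha : a ∈ C
    · exact .inr ⟨ha, hb⟩
    · exact .inl <| hC.isLeaf hnt hv fun c hc hvc =>
        (h c hc hvc).resolve_left fun hca => ha (hca ▸ hc)
  · exact .inl <| hC.isLeaf hnt hv fun c hc hvc =>
      (h c hc hvc).resolve_right fun hcb => hb (hcb ▸ hc)

lemma exists_mem_gridAdj_not_mem_ne {B : Set (ℤ × ℤ)} (hB : B.Finite) (hne : B.Nonempty)
    (v : ℤ × ℤ) : ∃ m ∈ B, ∃ n, gridAdj m n ∧ n ∉ B ∧ n ≠ v := by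
  obtain ⟨m, hm, hmax⟩ := B.exists_max_image (fun p => p.1 + p.2) hB hne
  have hout : ∀ n, n.1 + n.2 = m.1 + m.2 + 1 → n ∉ B := fun n hn h => by
    linarith [hmax n h]
  by_cases hv : (m.1 + 1, m.2) = v
  · refine ⟨m, hm, _, gridAdj_north m, hout _ (by simp; ring), fun h => ?_⟩
    have := congrArg Prod.snd (h.trans hv.symm)
    simp at this
  · exact ⟨m, hm, _, gridAdj_east m, hout _ (by simp; ring), hv⟩

section separation

variable {C : Set (ℤ × ℤ)} {v z : ℤ × ℤ}

lemma Contractible.insert_component (hC : Contractible C) (hfin : C.Finite) (hv : v ∈ C) :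
    Contractible (insert v {x | ReachIn (C \ {v}) z x}) := by
  set A := {x | ReachIn (C \ {v}) z x}
  have hAC : insert v A ⊆ C := Set.insert_subset hv fun x hx => hx.mem_right.1
  refine hC.of_subset hAC fun x hx => ?_
  by_cases hxC : x ∉ C
  · exact ⟨x, hxC, .refl hx⟩
  rw [not_not] at hxC
  have hxv : x ≠ v := fun h => hx (h ▸ Set.mem_insert v A)
  have hxA : x ∉ A := fun h => hx (Set.mem_insert_of_mem v h)
  set B := {c | ReachIn (C \ {v}) x c}
  have hBA : B ⊆ (insert v A)ᶜ := by
    rintro c hc (rfl | hcA)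
    · exact hc.mem_right.2 rfl
    · exact hxA (hcA.trans hc.symm)
  obtain ⟨m, hm, n, hmn, hnB, hnv⟩ := exists_mem_gridAdj_not_mem_ne (B := B)
    (hfin.subset fun c hc => hc.mem_right.1) ⟨x, .refl ⟨hxC, hxv⟩⟩ v
  have hnC : n ∉ C := fun hn => hnB (hm.tail hmn ⟨hn, hnv⟩)
  exact ⟨n, hnC, (hm.to_component.mono hBA).tail hmn fun h => hnC (hAC h)⟩

lemma IsDisk.insert_component (hC : IsDisk C) (hv : v ∈ C) (hz : z ∈ C \ {v})
    (hvz : gridAdj v z) : IsDisk (insert v {x | ReachIn (C \ {v}) z x}) := by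
  set A := {x | ReachIn (C \ {v}) z x}
  have hzA : ReachIn (insert v A) z z := .refl (Set.mem_insert_of_mem v (.refl hz))
  have hreach : ∀ p ∈ insert v A, ReachIn (insert v A) z p := by
    rintro p (rfl | hp)
    · exact hzA.tail hvz.symm (Set.mem_insert p A)
    · exact hp.to_component.mono (Set.subset_insert v A)
  refine ⟨hC.finite.subset (Set.insert_subset hv fun x hx => hx.mem_right.1),
    ⟨⟨v, Set.mem_insert v A⟩, fun p hp q hq => (hreach p hp).symm.trans (hreach q hq)⟩,
    hC.contractible.insert_component hC.finite hv⟩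

end separation

section induction

variable {C : Set (ℤ × ℤ)}
  (ih : ∀ D : Set (ℤ × ℤ), D.ncard < C.ncard → IsDisk D → D.Nontrivial →
    {r | Removable D r}.Nontrivial)

include ih

lemma exists_removable_of_not_reachIn (hC : IsDisk C) {v z z' : ℤ × ℤ} (hv : v ∈ C)
    (hvz : gridAdj v z) (hz : z ∈ C) (hz' : z' ∈ C \ {v}) (hsep : ¬ ReachIn (C \ {v}) z z') :
    ∃ r, Removable C r ∧ ReachIn (C \ {v}) z r := by
  set A := {x | ReachIn (C \ {v}) z x}
  have hz : z ∈ C \ {v} := ⟨hz, hvz.ne.symm⟩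
  have hAC : insert v A ⊆ C := Set.insert_subset hv fun x hx => hx.mem_right.1
  have hcard : (insert v A).ncard < C.ncard := by
    refine Set.ncard_lt_ncard ⟨hAC, fun h => ?_⟩ hC.finite
    rcases h hz'.1 with h | h
    exacts [hz'.2 h, hsep h]
  obtain ⟨r, hr, hrv⟩ := (ih _ hcard (hC.insert_component hv hz hvz)
    ⟨v, Set.mem_insert v A, z, Set.mem_insert_of_mem v (.refl hz), hvz.ne⟩).exists_ne v
  have hrA : r ∈ A := (Set.mem_insert_iff.1 hr.mem).resolve_left hrv
  refine ⟨r, hr.of_subset hAC fun c hc hrc => ?_, hrA⟩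
  by_cases hcv : c = v
  · exact hcv ▸ Set.mem_insert v A
  · exact Set.mem_insert_of_mem v (hrA.tail hrc ⟨hc, hcv⟩)

lemma nontrivial_removable_of_not_reachIn (hC : IsDisk C) {v z z' : ℤ × ℤ} (hv : v ∈ C)
    (hvz : gridAdj v z) (hz : z ∈ C) (hvz' : gridAdj v z') (hz' : z' ∈ C)
    (hsep : ¬ ReachIn (C \ {v}) z z') : {r | Removable C r}.Nontrivial := by
  obtain ⟨r, hr, hzr⟩ :=
    exists_removable_of_not_reachIn ih hC hv hvz hz ⟨hz', hvz'.ne.symm⟩ hsep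
  obtain ⟨r', hr', hz'r'⟩ := exists_removable_of_not_reachIn ih hC hv hvz' hz'
    ⟨hz, hvz.ne.symm⟩ fun h => hsep h.symm
  exact ⟨r, hr, r', hr', fun h => hsep (hzr.trans (h ▸ hz'r').symm)⟩

lemma nontrivial_removable_of_isLeaf (hC : IsDisk C) {t : ℤ × ℤ} (ht : IsLeaf C t) :
    {r | Removable C r}.Nontrivial := by
  have ⟨htC, s, ⟨hs, hts⟩, huniq⟩ := ht
  have hsD : s ∈ C \ {t} := ⟨hs, hts.ne.symm⟩
  rcases Set.nonempty_of_mem hsD |>.exists_eq_singleton_or_nontrivial with ⟨a, ha⟩ | hnt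
  · -- `C = {t, s}`
    refine ⟨t, .inl ht, s, .inl ⟨hs, t, ⟨htC, hts.symm⟩, ?_⟩, hts.ne⟩
    rintro c ⟨hc, hsc⟩
    by_contra hct
    have hcD : c ∈ C \ {t} := ⟨hc, hct⟩
    rw [ha] at hcD hsD
    exact hsc.ne (hsD.trans hcD.symm)
  · obtain ⟨r, hr, hrs⟩ := (ih _ (Set.ncard_sdiff_singleton_lt_of_mem htC hC.finite)
      (hC.diff_removable (.inl ht)) hnt).exists_ne s
    refine ⟨t, .inl ht, r, hr.of_subset Set.sdiff_subset
      fun c hc hrc => ⟨hc, ?_⟩, fun h => hr.mem.2 h.symm⟩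
    rintro rfl
    exact hrs (huniq r ⟨hr.mem.1, hrc.symm⟩)

lemma removable_or_nontrivial_of_east (hC : IsDisk C) (hnt : C.Nontrivial) {t : ℤ × ℤ}
    (ht : t ∈ C) (htop : ∀ c ∈ C, c.2 ≤ t.2) (hE : (t.1 + 1, t.2) ∉ C) :
    Removable C t ∨ {r | Removable C r}.Nontrivial := by
  have hN : (t.1, t.2 + 1) ∉ C := fun h => by linarith [htop _ h]
  rcases hC.connected.isLeaf_or_mem hnt ht (a := (t.1 - 1, t.2)) (b := (t.1, t.2 - 1))
    fun c hc htc => by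
      rcases gridAdj_iff_eq.1 htc with rfl | rfl | rfl | rfl
      exacts [absurd hc hE, .inl rfl, absurd hc hN, .inr rfl] with hleaf | ⟨hW, hS⟩
  · exact .inl (.inl hleaf)
  by_cases hreach : ReachIn (C \ {t}) (t.1, t.2 - 1) (t.1 - 1, t.2)
  · exact .inl <| .inr <| .inl ⟨⟨ht, hW, hS, hE, hN⟩,
      diagonal_mem_of_reachIn_south_west hC.contractible htop ht hreach⟩
  · exact .inr <| nontrivial_removable_of_not_reachIn ih hC ht (gridAdj_south t) hS
      (gridAdj_west t) hW hreach

lemma removable_or_nontrivial_of_west (hC : IsDisk C) (hnt : C.Nontrivial) {t : ℤ × ℤ}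
    (ht : t ∈ C) (htop : ∀ c ∈ C, c.2 ≤ t.2) (hW : (t.1 - 1, t.2) ∉ C) :
    Removable C t ∨ {r | Removable C r}.Nontrivial := by
  have hN : (t.1, t.2 + 1) ∉ C := fun h => by linarith [htop _ h]
  rcases hC.connected.isLeaf_or_mem hnt ht (a := (t.1 + 1, t.2)) (b := (t.1, t.2 - 1))
    fun c hc htc => by
      rcases gridAdj_iff_eq.1 htc with rfl | rfl | rfl | rfl
      exacts [.inl rfl, absurd hc hW, absurd hc hN, .inr rfl] with hleaf | ⟨hE, hS⟩
  · exact .inl (.inl hleaf)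
  by_cases hreach : ReachIn (C \ {t}) (t.1, t.2 - 1) (t.1 + 1, t.2)
  · exact .inl <| .inr <| .inr ⟨⟨ht, hE, hS, hW, hN⟩,
      diagonal_mem_of_reachIn_south_east hC.contractible htop ht hreach⟩
  · exact .inr <| nontrivial_removable_of_not_reachIn ih hC ht (gridAdj_south t) hS
      (gridAdj_east t) hE hreach

lemma IsDisk.nontrivial_removable_of_forall_lt (hC : IsDisk C) (hnt : C.Nontrivial) :
    {r | Removable C r}.Nontrivial := by
  obtain ⟨t₀, ht₀, htop⟩ := C.exists_max_image (·.2) hC.finite hnt.nonempty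
  have hR : {c ∈ C | c.2 = t₀.2}.Finite := hC.finite.subset (Set.sep_subset _ _)
  obtain ⟨t, ⟨ht, hty⟩, hright⟩ := Set.exists_max_image _ (·.1) hR ⟨t₀, ht₀, rfl⟩
  obtain ⟨u, ⟨hu, huy⟩, hleft⟩ := Set.exists_min_image _ (·.1) hR ⟨t₀, ht₀, rfl⟩
  have hE : (t.1 + 1, t.2) ∉ C := fun h => by linarith [hright _ ⟨h, hty⟩]
  have hW : (u.1 - 1, u.2) ∉ C := fun h => by linarith [hleft _ ⟨h, huy⟩]
  rw [← hty] at htop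
  by_cases hut : u = t
  · subst hut
    refine nontrivial_removable_of_isLeaf ih hC <|
      hC.connected.isLeaf (s := (u.1, u.2 - 1)) hnt hu fun c hc huc => ?_
    rcases gridAdj_iff_eq.1 huc with rfl | rfl | rfl | rfl
    · exact absurd hc hE
    · exact absurd hc hW
    · linarith [htop _ hc]
    · rfl
  rcases removable_or_nontrivial_of_east ih hC hnt ht htop hE with ht' | h
  · rcases removable_or_nontrivial_of_west ih hC hnt hu (huy ▸ hty ▸ htop) hW with hu' | h
    · exact ⟨t, ht', u, hu', Ne.symm hut⟩
    · exact h
  · exact h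

end induction

theorem IsDisk.nontrivial_removable {C : Set (ℤ × ℤ)} (hC : IsDisk C) (hnt : C.Nontrivial) :
    {r | Removable C r}.Nontrivial := by
  induction hn : C.ncard using Nat.strong_induction_on generalizing C with
  | _ n ih =>
    exact hC.nontrivial_removable_of_forall_lt
      (fun _ hD hD' hnt' => ih _ (hn ▸ hD) hD' hnt' rfl) hnt

def ReducesToCell (C : Set (ℤ × ℤ)) : Prop :=
  ∃ (n : ℕ) (f : ℕ → Set (ℤ × ℤ)), f 0 = C ∧
    (∀ i ≤ n, (f i).Finite ∧ ConnectedConf (f i) ∧ Contractible (f i)) ∧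
    (∀ i < n, ElimStep (f i) (f (i + 1))) ∧
    ∃ v, f n = {v}

lemma IsDisk.reducesToCell_singleton {v : ℤ × ℤ} (h : IsDisk {v}) : ReducesToCell {v} :=
  ⟨0, fun _ => {v}, rfl, fun _ _ => ⟨h.finite, h.connected, h.contractible⟩,
    fun _ hi => absurd hi (Nat.not_lt_zero _), v, rfl⟩

lemma ReducesToCell.of_diff_removable {C : Set (ℤ × ℤ)} (hC : IsDisk C) {v : ℤ × ℤ}
    (hv : Removable C v) (h : ReducesToCell (C \ {v})) : ReducesToCell C := by
  obtain ⟨n, f, hf₀, hf, hstep, w, hw⟩ := h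
  refine ⟨n + 1, fun | 0 => C | i + 1 => f i, rfl, ?_, ?_, w, hw⟩
  · rintro (_ | i) hi
    exacts [⟨hC.finite, hC.connected, hC.contractible⟩, hf i (by omega)]
  · rintro (_ | i) hi
    exacts [⟨v, hf₀, hv⟩, hstep i (by omega)]

theorem IsDisk.reducesToCell {C : Set (ℤ × ℤ)} (hC : IsDisk C) : ReducesToCell C := by
  induction hn : C.ncard using Nat.strong_induction_on generalizing C with
  | _ n ih =>
    rcases hC.connected.1.exists_eq_singleton_or_nontrivial with ⟨v, rfl⟩ | hnt
    · exact hC.reducesToCell_singleton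
    obtain ⟨r, hr, -⟩ := hC.nontrivial_removable hnt
    have hlt := Set.ncard_sdiff_singleton_lt_of_mem hr.mem hC.finite
    exact .of_diff_removable hC hr <| ih _ (hn ▸ hlt) (hC.diff_removable hr) rfl

/-- Any finite connected contractible configuration can be reduced to a single
cell by finitely many elimination steps (removal of a leaf, or of a NE- or
NW-corner belonging to a 4-cycle), with all intermediate configurations
connected and contractible. -/
theorem reduction_to_single_cell (C : Set (ℤ × ℤ)) (hfin : C.Finite)
    (hconn : ConnectedConf C) (hcontr : Contractible C) :
    ∃ (n : ℕ) (f : ℕ → Set (ℤ × ℤ)), f 0 = C ∧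
      (∀ i ≤ n, (f i).Finite ∧ ConnectedConf (f i) ∧ Contractible (f i)) ∧
      (∀ i < n, ElimStep (f i) (f (i + 1))) ∧
      ∃ v, f n = {v} :=
  IsDisk.reducesToCell ⟨hfin, hconn, hcontr⟩
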